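/- arXiv:2009.02029 — 2 statements merged into one kernel-verified Lean document; each statement's English description precedes it below -/
import Mathlib

section
/- Let X be a nonnegative random variable with cumulative distribution function F and finite mean E[X] = ∫₀^∞ (1 − F(x)) dx. Then the cumulative entropy of X satisfies 𝓒𝓔(X) = E[X] − Σ_{n=1}^∞ μ_{1:n+1}/(n(n+1)); equivalently 𝓒𝓔(X) + Σ_{n=1}^∞ μ_{1:n+1}/(n(n+1)) = E[X], where all terms are nonnegative. -/
/-! Put `u = 1 - F x ∈ [0, 1]`. Splitting `1 / ((n + 1) (n + 2)) = 1 / (n + 1) - 1 / (n + 2)` in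
the series `-log (1 - u) = ∑ uⁿ⁺¹ / (n + 1)` gives
`∑ uⁿ⁺² / ((n + 1) (n + 2)) = u + (1 - u) log (1 - u)` (at `u = 1` the series telescopes to
`1`), that is, pointwise `-F log F + ∑ (1 - F)ⁿ⁺² / ((n + 1) (n + 2)) = 1 - F`. Every term is
nonnegative, so integrating in `[0, ∞]` and exchanging sum and integral by monotone convergence
gives the identity. -/

open MeasureTheory ProbabilityTheory
open scoped ENNReal

lemma hasSum_one_div_add_one_mul_add_two :
    HasSum (fun n : ℕ => 1 / (((n : ℝ) + 1) * ((n : ℝ) + 2))) 1 := by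
  have partial_sum : ∀ N : ℕ,
      ∑ n ∈ Finset.range N, 1 / (((n : ℝ) + 1) * ((n : ℝ) + 2)) = 1 - 1 / ((N : ℝ) + 1) := by
    intro N
    induction N with
    | zero => norm_num
    | succ N ih =>
      rw [Finset.sum_range_succ, ih]
      push_cast
      field_simp
      ring
  rw [hasSum_iff_tendsto_nat_of_nonneg (fun n => by positivity)]
  simp only [partial_sum]
  simpa using tendsto_one_div_add_atTop_nhds_zero_nat.const_sub (1 : ℝ)

lemma hasSum_pow_div_add_one_mul_add_two {u : ℝ} (h₀ : -1 < u) (h₁ : u ≤ 1) :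
    HasSum (fun n : ℕ => u ^ (n + 2) / (((n : ℝ) + 1) * ((n : ℝ) + 2)))
      (u + (1 - u) * Real.log (1 - u)) := by
  rcases h₁.eq_or_lt with rfl | h₁
  · simpa using hasSum_one_div_add_one_mul_add_two
  have hlog := Real.hasSum_pow_div_log_of_abs_lt_one (abs_lt.2 ⟨h₀, h₁⟩)
  have hlog_shift :
      HasSum (fun n : ℕ => u ^ (n + 2) / ((n : ℝ) + 2)) (-Real.log (1 - u) - u) := by
    have := (hasSum_nat_add_iff' 1).2 hlog
    norm_num [add_assoc] at this
    exact this
  have partial_fractions : ∀ n : ℕ, u ^ (n + 2) / (((n : ℝ) + 1) * ((n : ℝ) + 2))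
      = u * (u ^ (n + 1) / ((n : ℝ) + 1)) - u ^ (n + 2) / ((n : ℝ) + 2) := by
    intro n
    field_simp
    ring
  rw [funext partial_fractions,
    show u + (1 - u) * Real.log (1 - u) = u * -Real.log (1 - u) - (-Real.log (1 - u) - u) by ring]
  exact (hlog.mul_left u).sub hlog_shift

lemma ENNReal.tsum_ofReal_pow_div_add_one_mul_add_two {u : ℝ} (h₀ : 0 ≤ u) (h₁ : u ≤ 1) :
    ∑' n : ℕ, ENNReal.ofReal (u ^ (n + 2)) / (((n : ℝ≥0∞) + 1) * ((n : ℝ≥0∞) + 2))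
      = ENNReal.ofReal (u + (1 - u) * Real.log (1 - u)) := by
  have hsum := hasSum_pow_div_add_one_mul_add_two (by linarith) h₁
  rw [← hsum.tsum_eq, ENNReal.ofReal_tsum_of_nonneg (fun n => by positivity) hsum.summable]
  congr 1 with n
  rw [ENNReal.ofReal_div_of_pos (by positivity)]
  congr 1
  exact_mod_cast ENNReal.ofReal_natCast ((n + 1) * (n + 2))

lemma ofReal_neg_mul_log_add_tsum_eq_ofReal_one_sub {F : ℝ} (h₀ : 0 ≤ F) (h₁ : F ≤ 1) :
    ENNReal.ofReal (-(F * Real.log F))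
      + ∑' n : ℕ, ENNReal.ofReal ((1 - F) ^ (n + 2)) / (((n : ℝ≥0∞) + 1) * ((n : ℝ≥0∞) + 2))
    = ENNReal.ofReal (1 - F) := by
  have hsum := hasSum_pow_div_add_one_mul_add_two (u := 1 - F) (by linarith) (by linarith)
  rw [ENNReal.tsum_ofReal_pow_div_add_one_mul_add_two (by linarith) (by linarith), sub_sub_cancel,
    ← ENNReal.ofReal_add (by nlinarith [Real.log_nonpos h₀ h₁])
      (by simpa using hsum.nonneg fun n => by positivity)]
  ring_nf

lemma lintegral_neg_mul_log_add_tsum_eq_lintegral_one_sub {α : Type*} [MeasurableSpace α]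
    (ν : Measure α) {F : α → ℝ} (hF : Measurable F) (h₀ : ∀ x, 0 ≤ F x) (h₁ : ∀ x, F x ≤ 1) :
    (∫⁻ x, ENNReal.ofReal (-(F x * Real.log (F x))) ∂ν)
      + ∑' n : ℕ, (∫⁻ x, ENNReal.ofReal ((1 - F x) ^ (n + 2)) ∂ν)
          / (((n : ℝ≥0∞) + 1) * ((n : ℝ≥0∞) + 2))
    = ∫⁻ x, ENNReal.ofReal (1 - F x) ∂ν := by
  have hpow : ∀ n : ℕ, Measurable fun x => ENNReal.ofReal ((1 - F x) ^ (n + 2)) := by fun_prop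
  have hlog : Measurable fun x => ENNReal.ofReal (-(F x * Real.log (F x))) := by fun_prop
  simp_rw [div_eq_mul_inv, ← lintegral_mul_const _ (hpow _)]
  rw [← lintegral_tsum fun n => ((hpow n).mul_const _).aemeasurable,
    ← lintegral_add_left hlog]
  simp_rw [← div_eq_mul_inv, ofReal_neg_mul_log_add_tsum_eq_ofReal_one_sub (h₀ _) (h₁ _)]

theorem ce_add_tsum_min_order_stats_eq_mean_general
    (μ : Measure ℝ) :
    (∫⁻ x in Set.Ioi (0 : ℝ),
        ENNReal.ofReal (-(cdf μ x * Real.log (cdf μ x))))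
      + ∑' n : ℕ,
          (∫⁻ x in Set.Ioi (0 : ℝ), ENNReal.ofReal ((1 - cdf μ x) ^ (n + 2)))
            / (((n : ℝ≥0∞) + 1) * ((n : ℝ≥0∞) + 2))
    = ∫⁻ x in Set.Ioi (0 : ℝ), ENNReal.ofReal (1 - cdf μ x) :=
  lintegral_neg_mul_log_add_tsum_eq_lintegral_one_sub _ (cdf μ).mono.measurable
    (cdf_nonneg μ) (cdf_le_one μ)

/-- For a nonnegative random variable with cdf `F = cdf μ` and finite mean
`E[X] = ∫₀^∞ (1 - F x) dx`, the cumulative entropy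
`𝓒𝓔(X) = ∫₀^∞ -(F x) log (F x) dx` satisfies
`𝓒𝓔(X) + ∑_{n=1}^∞ μ_{1:n+1} / (n (n+1)) = E[X]`, all terms being nonnegative
(values in `[0, ∞]`), where `μ_{1:m} = ∫₀^∞ (1 - F x)^m dx` is the mean of the smallest
order statistic. -/
theorem ce_add_tsum_min_order_stats_eq_mean
    (μ : Measure ℝ) [IsProbabilityMeasure μ] (hnonneg : μ (Set.Iio 0) = 0)
    (hmean : ∫⁻ x in Set.Ioi (0 : ℝ), ENNReal.ofReal (1 - cdf μ x) ≠ ⊤) :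
    (∫⁻ x in Set.Ioi (0 : ℝ),
        ENNReal.ofReal (-(cdf μ x * Real.log (cdf μ x))))
      + ∑' n : ℕ,
          (∫⁻ x in Set.Ioi (0 : ℝ), ENNReal.ofReal ((1 - cdf μ x) ^ (n + 2)))
            / (((n : ℝ≥0∞) + 1) * ((n : ℝ≥0∞) + 2))
    = ∫⁻ x in Set.Ioi (0 : ℝ), ENNReal.ofReal (1 - cdf μ x) :=
  ce_add_tsum_min_order_stats_eq_mean_general μ
end

section
/- Let X be a nonnegative random variable with cumulative distribution function F and finite mean E[X] = ∫₀^∞ (1 − F(x)) dx. Then for every m ∈ ℕ, the cumulative entropy of X satisfies the upper bound 𝓒𝓔(X) ≤ E[X] − Σ_{n=1}^m μ_{1:n+1}/(n(n+1)). -/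
open MeasureTheory ProbabilityTheory Set

/-!
The partial-fraction identity `1 / ((n + 1) (n + 2)) = 1 / (n + 1) - 1 / (n + 2)` and the
series `-log (1 - u) = ∑ u ^ (n + 1) / (n + 1)` give, for `p ∈ (0, 1]`,
`∑_{n ≥ 0} (1 - p) ^ (n + 2) / ((n + 1) (n + 2)) = 1 - p + p log p`. All terms being nonnegative,
every partial sum is at most this, i.e. `-p log p ≤ 1 - p - ∑_{n < m} …`; the case `p = 0` is a
telescoping sum. Substituting `p = F x` and integrating gives the bound, every integrand being
dominated by the integrable `1 - F`.
-/

lemma Real.hasSum_pow_div_succ_mul_succ_succ {u : ℝ} (hu : |u| < 1) :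
    HasSum (fun n : ℕ => u ^ (n + 2) / (((n : ℝ) + 1) * ((n : ℝ) + 2)))
      (u + (1 - u) * Real.log (1 - u)) := by
  have hlog := Real.hasSum_pow_div_log_of_abs_lt_one hu
  have hshift :
      HasSum (fun n : ℕ => u ^ (n + 1 + 1) / ((n : ℝ) + 1 + 1)) (-Real.log (1 - u) - u) := by
    simpa using (hasSum_nat_add_iff' 1).2 hlog
  have h := (hlog.mul_left u).sub hshift
  rw [show u * -Real.log (1 - u) - (-Real.log (1 - u) - u) = u + (1 - u) * Real.log (1 - u) by ring]
    at h
  refine h.congr_fun fun n => ?_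
  field_simp
  ring

lemma sum_range_one_div_succ_mul_succ_succ (m : ℕ) :
    ∑ n ∈ Finset.range m, 1 / (((n : ℝ) + 1) * ((n : ℝ) + 2)) = 1 - 1 / ((m : ℝ) + 1) := by
  induction m with
  | zero => norm_num
  | succ m ih =>
    rw [Finset.sum_range_succ, ih]
    push_cast
    field_simp
    ring

lemma neg_mul_log_le_sub_sum_pow_div (m : ℕ) {p : ℝ} (h0 : 0 ≤ p) (h1 : p ≤ 1) :
    -(p * Real.log p) ≤ (1 - p) - ∑ n ∈ Finset.range m,
      (1 - p) ^ (n + 2) / (((n : ℝ) + 1) * ((n : ℝ) + 2)) := by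
  rcases h0.eq_or_lt with rfl | hp
  · have htel := sum_range_one_div_succ_mul_succ_succ m
    simp only [sub_zero, one_pow, Real.log_zero, mul_zero, neg_zero] at htel ⊢
    have : 0 < 1 / ((m : ℝ) + 1) := by positivity
    linarith
  · have hq : 0 ≤ 1 - p := by linarith
    have hu : |1 - p| < 1 := by rw [abs_of_nonneg hq]; linarith
    have hsum := sum_le_hasSum (Finset.range m) (fun n _ => by positivity)
      (Real.hasSum_pow_div_succ_mul_succ_succ hu)
    rw [sub_sub_cancel] at hsum
    linarith

theorem neg_integral_mul_log_le_integral_sub_sum {α : Type*} [MeasurableSpace α] {ν : Measure α}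
    {F : α → ℝ} (hF : Measurable F) (h0 : ∀ x, 0 ≤ F x) (h1 : ∀ x, F x ≤ 1)
    (hint : Integrable (fun x => 1 - F x) ν) (m : ℕ) :
    -∫ x, F x * Real.log (F x) ∂ν ≤ (∫ x, (1 - F x) ∂ν) - ∑ n ∈ Finset.range m,
      (∫ x, (1 - F x) ^ (n + 2) ∂ν) / (((n : ℝ) + 1) * ((n : ℝ) + 2)) := by
  have hpow : ∀ n : ℕ,
      Integrable (fun x => (1 - F x) ^ (n + 2) / (((n : ℝ) + 1) * ((n : ℝ) + 2))) ν := by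
    intro n
    refine (hint.mono' ((hF.const_sub 1).pow_const _).aestronglyMeasurable ?_).div_const _
    refine .of_forall fun x => ?_
    have : 0 ≤ 1 - F x := by linarith [h1 x]
    rw [Real.norm_eq_abs, abs_of_nonneg (by positivity)]
    exact pow_le_of_le_one this (by linarith [h0 x]) (by omega)
  have hmul_log : Integrable (fun x => F x * Real.log (F x)) ν := by
    refine hint.mono' (hF.mul (Real.measurable_log.comp hF)).aestronglyMeasurable ?_
    refine .of_forall fun x => ?_
    rw [Real.norm_eq_abs, abs_of_nonpos
      (mul_nonpos_of_nonneg_of_nonpos (h0 x) (Real.log_nonpos (h0 x) (h1 x)))]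
    simpa using neg_mul_log_le_sub_sum_pow_div 0 (h0 x) (h1 x)
  simp_rw [← integral_div, ← integral_finsetSum _ fun n _ => hpow n]
  rw [← integral_sub hint (integrable_finsetSum _ fun n _ => hpow n), ← integral_neg]
  exact integral_mono hmul_log.neg (hint.sub (integrable_finsetSum _ fun n _ => hpow n))
    fun x => neg_mul_log_le_sub_sum_pow_div m (h0 x) (h1 x)

theorem ce_le_mean_sub_finite_sum_min_order_stats_general
    (μ : Measure ℝ)
    (hmean : IntegrableOn (fun x => 1 - cdf μ x) (Set.Ioi 0) volume) :
    ∀ m : ℕ,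
      -∫ x in Set.Ioi (0 : ℝ), cdf μ x * Real.log (cdf μ x)
        ≤ (∫ x in Set.Ioi (0 : ℝ), (1 - cdf μ x))
            - ∑ n ∈ Finset.range m,
                (∫ x in Set.Ioi (0 : ℝ), (1 - cdf μ x) ^ (n + 2))
                  / (((n : ℝ) + 1) * ((n : ℝ) + 2)) :=
  neg_integral_mul_log_le_integral_sub_sum (monotone_cdf μ).measurable (cdf_nonneg μ)
    (cdf_le_one μ) hmean

/-- For a nonnegative random variable with cdf `F = cdf μ` and finite mean
`E[X] = ∫₀^∞ (1 - F x) dx`, for every `m ∈ ℕ` the cumulative entropy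
`𝓒𝓔(X) = -∫₀^∞ (F x) log (F x) dx` satisfies the upper bound
`𝓒𝓔(X) ≤ E[X] - ∑_{n=1}^m μ_{1:n+1} / (n (n+1))`, where
`μ_{1:k} = ∫₀^∞ (1 - F x)^k dx` is the mean of the smallest order statistic. -/
theorem ce_le_mean_sub_finite_sum_min_order_stats
    (μ : Measure ℝ) [IsProbabilityMeasure μ] (hnonneg : μ (Set.Iio 0) = 0)
    (hmean : IntegrableOn (fun x => 1 - cdf μ x) (Set.Ioi 0) volume) :
    ∀ m : ℕ,
      -∫ x in Set.Ioi (0 : ℝ), cdf μ x * Real.log (cdf μ x)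
        ≤ (∫ x in Set.Ioi (0 : ℝ), (1 - cdf μ x))
            - ∑ n ∈ Finset.range m,
                (∫ x in Set.Ioi (0 : ℝ), (1 - cdf μ x) ^ (n + 2))
                  / (((n : ℝ) + 1) * ((n : ℝ) + 2)) :=
  ce_le_mean_sub_finite_sum_min_order_stats_general μ hmean
end
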